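/- Let T be a locally finite infinite rooted tree on which the simple random walk is recurrent, and let (ω_n)_{n∈ℕ} be a summable sequence of positive reals. Then the infimum over all cutsets Π separating the root from infinity of Σ_{e∈Π} ω_{|e|} is 0. -/

import Mathlib

open scoped ENNReal NNReal Classical

/-- A locally finite rooted tree, encoded by a parent function: every vertex eventually
reaches the root by iterating `parent`, and every vertex has finitely many children.
Non-root vertices are identified with the edge joining them to their parent. -/
structure GrowingTree where
  V : Type
  root : V
  parent : V → V
  parent_root : parent root = root
  reaches_root : ∀ v, ∃ n, parent^[n] v = root
  locallyFinite : ∀ v, {w | parent w = v ∧ w ≠ root}.Finite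

namespace GrowingTree

variable (T : GrowingTree)

/-- The children of a vertex. -/
noncomputable def children (v : T.V) : Finset T.V := (T.locallyFinite v).toFinset

/-- The depth (distance from the root) of a vertex. -/
noncomputable def depth (v : T.V) : ℕ := Nat.find (T.reaches_root v)

/-- A flow from the root to infinity: at every vertex the value (the flow through the
edge above the vertex, resp. the strength at the root) equals the total flow to the
children. -/
def IsFlow (θ : T.V → ℝ≥0) : Prop :=
  ∀ v, θ v = ∑ w ∈ T.children v, θ w

/-- The strength of a flow: the total outflow from the root. -/
def strength (θ : T.V → ℝ≥0) : ℝ≥0 := θ T.root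

/-- A flow respects the capacities `κ` if it is bounded by `κ` on every edge
(i.e. at every non-root vertex). -/
def Respects (θ : T.V → ℝ≥0) (κ : T.V → ℝ≥0) : Prop :=
  ∀ v, v ≠ T.root → θ v ≤ κ v

/-- The maximal flow from the root to infinity with respect to capacities `κ`. -/
noncomputable def maxFlow (κ : T.V → ℝ≥0) : ℝ≥0∞ :=
  ⨆ θ : {θ : T.V → ℝ≥0 // T.IsFlow θ ∧ T.Respects θ κ}, (T.strength θ.1 : ℝ≥0∞)

/-- An infinite self-avoiding path starting at the root. -/
def IsRay (r : ℕ → T.V) : Prop :=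
  r 0 = T.root ∧ ∀ n, T.parent (r (n + 1)) = r n ∧ r (n + 1) ≠ T.root

/-- A cutset separating the root from infinity: a set of edges (non-root vertices) met by
every infinite self-avoiding path starting at the root. -/
def IsCutset (C : Set T.V) : Prop :=
  T.root ∉ C ∧ ∀ r : ℕ → T.V, T.IsRay r → ∃ n, r (n + 1) ∈ C

/-- The total capacity of a cutset. -/
noncomputable def cutsetSum (κ : T.V → ℝ≥0) (C : Set T.V) : ℝ≥0∞ :=
  ∑' v : C, (κ v.1 : ℝ≥0∞)

/-- The minimum of the capacities along the path from the root to an edge (inclusive). -/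
noncomputable def minCap (κ : T.V → ℝ≥0) (v : T.V) : ℝ≥0 :=
  if h : v = T.root then κ v
  else
    (Finset.range (T.depth v)).inf'
      (by
        rw [Finset.nonempty_range_iff]
        intro h0
        apply h
        have hs : T.parent^[T.depth v] v = T.root := Nat.find_spec (T.reaches_root v)
        rw [h0] at hs
        simpa using hs)
      (fun k => κ (T.parent^[k] v))

/-- The energy of a flow. -/
noncomputable def energy (θ : T.V → ℝ≥0) : ℝ≥0∞ :=
  ∑' v : {v : T.V // v ≠ T.root}, ((θ v.1 : ℝ≥0∞)) ^ 2

end GrowingTree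

/-! If the infimum were positive, the minimal cut values `m e` of the subtrees hanging from
the edges `e` satisfy `m e ≤ ω_{|e|}` and `m e ≤ ∑_{e' child of e} m e'`. Starting with
strength `∑_{e at the root} m e > 0` and splitting the flow at every vertex among the children
in proportion to `m` gives a flow `θ ≤ m`. Since the flow through each level equals the
strength, its energy is at most `∑ θ(e) ω_{|e|} = strength · ∑ ω_n < ∞`, contradicting
recurrence. -/

theorem ENNReal.sum_iInf_eq_iInf_pi {ι : Type*} {α : ι → Type*} [∀ i, Nonempty (α i)]
    (s : Finset ι) (f : ∀ i, α i → ℝ≥0∞) :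
    ∑ i ∈ s, ⨅ a, f i a = ⨅ x : (∀ i, α i), ∑ i ∈ s, f i (x i) := by
  have hcomp : ∀ i, ⨅ a, f i a = ⨅ x : (∀ i, α i), f i (x i) := fun i =>
    ((Function.surjective_eval i).iInf_comp (f i)).symm
  simp only [hcomp]
  refine (ENNReal.iInf_sum fun _ x y => ⟨fun i => if f i (x i) ≤ f i (y i) then x i else y i,
    fun i _ => ?_⟩).symm
  dsimp only
  split_ifs with h
  · exact ⟨le_rfl, h⟩
  · exact ⟨(not_le.mp h).le, le_rfl⟩

namespace GrowingTree

variable {T : GrowingTree}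

theorem mem_children {v w : T.V} : w ∈ T.children v ↔ T.parent w = v ∧ w ≠ T.root := by
  simp [children]

theorem parent_induction {P : T.V → Prop} (root : P T.root)
    (step : ∀ v, v ≠ T.root → P (T.parent v) → P v) (v : T.V) : P v := by
  obtain ⟨n, hn⟩ := T.reaches_root v
  induction n generalizing v with
  | zero => rwa [← hn] at root
  | succ n ih =>
    by_cases hv : v = T.root
    · rwa [hv]
    · exact step v hv (ih _ hn)

theorem depth_eq_zero_iff {v : T.V} : T.depth v = 0 ↔ v = T.root := by
  simp [depth]

theorem depth_of_mem_children {v w : T.V} (h : w ∈ T.children v) :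
    T.depth w = T.depth v + 1 := by
  obtain ⟨rfl, hw⟩ := mem_children.mp h
  obtain ⟨k, hk⟩ := Nat.exists_eq_succ_of_ne_zero (mt depth_eq_zero_iff.mp hw)
  have hspec : T.parent^[T.depth w] w = T.root := Nat.find_spec (T.reaches_root w)
  have hle : T.depth (T.parent w) ≤ k :=
    Nat.find_le (by rwa [hk, Function.iterate_succ_apply] at hspec)
  have hge : T.depth w ≤ T.depth (T.parent w) + 1 :=
    Nat.find_le (by rw [Function.iterate_succ_apply]; exact Nat.find_spec (T.reaches_root _))
  omega

theorem parent_mem_children {v : T.V} (hv : v ≠ T.root) : v ∈ T.children (T.parent v) :=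
  mem_children.mpr ⟨rfl, hv⟩

theorem depth_parent_lt {v : T.V} (hv : v ≠ T.root) : T.depth (T.parent v) < T.depth v := by
  rw [depth_of_mem_children (parent_mem_children hv)]
  exact Nat.lt_succ_self _

variable (T) in
noncomputable def level : ℕ → Finset T.V
  | 0 => {T.root}
  | n + 1 => (level n).biUnion T.children

theorem mem_level {v : T.V} {n : ℕ} : v ∈ T.level n ↔ T.depth v = n := by
  induction n generalizing v with
  | zero => simp [level, depth_eq_zero_iff]
  | succ n ih =>
    simp only [level, Finset.mem_biUnion]
    constructor
    · rintro ⟨u, hu, hv⟩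
      rw [depth_of_mem_children hv, ih.mp hu]
    · intro hv
      have hr : v ≠ T.root := fun h => by simp [h, depth_eq_zero_iff.mpr] at hv
      have := depth_of_mem_children (parent_mem_children hr)
      exact ⟨T.parent v, ih.mpr (by omega), parent_mem_children hr⟩

theorem IsFlow.sum_level {θ : T.V → ℝ≥0} (hθ : T.IsFlow θ) (n : ℕ) :
    ∑ v ∈ T.level n, θ v = T.strength θ := by
  induction n with
  | zero => simp [level, strength]
  | succ n ih =>
    rw [level, Finset.sum_biUnion, ← ih]
    · exact Finset.sum_congr rfl fun u _ => (hθ u).symm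
    · intro u _ u' _ hne
      exact Finset.disjoint_left.mpr fun w hw hw' =>
        hne ((mem_children.mp hw).1.symm.trans (mem_children.mp hw').1)

theorem IsFlow.energy_le {θ : T.V → ℝ≥0} (hθ : T.IsFlow θ) {g : ℕ → ℝ≥0∞}
    (hg : ∀ v, v ≠ T.root → (θ v : ℝ≥0∞) ≤ g (T.depth v)) :
    T.energy θ ≤ (∑' n, g n) * T.strength θ := by
  calc T.energy θ ≤ ∑' v : {v : T.V // v ≠ T.root}, (θ v.1 : ℝ≥0∞) * g (T.depth v.1) :=
        ENNReal.tsum_le_tsum fun v => by rw [sq]; exact mul_le_mul_right (hg v.1 v.2) _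
    _ ≤ ∑' v, (θ v : ℝ≥0∞) * g (T.depth v) :=
        ENNReal.tsum_comp_le_tsum_of_injective Subtype.val_injective _
    _ = ∑' n, ∑' v : T.depth ⁻¹' {n}, (θ v.1 : ℝ≥0∞) * g (T.depth v.1) :=
        (ENNReal.tsum_fiberwise _ _).symm
    _ = ∑' n, g n * T.strength θ := by
        refine tsum_congr fun n => ?_
        have hfib : T.depth ⁻¹' {n} = ↑(T.level n) := by ext; simp [mem_level]
        rw [hfib, Finset.tsum_subtype' (T.level n) fun v => (θ v : ℝ≥0∞) * g (T.depth v),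
          Finset.sum_congr rfl fun v hv => by rw [mem_level.mp hv], ← Finset.sum_mul,
          ← ENNReal.ofNNReal_finsetSum, hθ.sum_level, mul_comm]
    _ = (∑' n, g n) * T.strength θ := ENNReal.tsum_mul_right

noncomputable def splitFlow (M : T.V → ℝ≥0) (a : ℝ≥0) (v : T.V) : ℝ≥0 :=
  if _ : v = T.root then a
  else splitFlow M a (T.parent v) * M v / ∑ u ∈ T.children (T.parent v), M u
termination_by T.depth v
decreasing_by exact depth_parent_lt ‹_›

section splitFlow

variable {M : T.V → ℝ≥0} {a : ℝ≥0}

theorem splitFlow_root : splitFlow M a T.root = a := by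
  rw [splitFlow, dif_pos rfl]

theorem splitFlow_of_mem_children {v w : T.V} (hw : w ∈ T.children v) :
    splitFlow M a w = splitFlow M a v * M w / ∑ u ∈ T.children v, M u := by
  obtain ⟨rfl, hr⟩ := mem_children.mp hw
  rw [splitFlow, dif_neg hr]

theorem splitFlow_le_of_mem_children {v w : T.V} (hw : w ∈ T.children v)
    (hv : splitFlow M a v ≤ ∑ u ∈ T.children v, M u) : splitFlow M a w ≤ M w := by
  rw [splitFlow_of_mem_children hw]
  by_cases hS : ∑ u ∈ T.children v, M u = 0
  · simp [hS]
  · calc splitFlow M a v * M w / ∑ u ∈ T.children v, M u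
        ≤ (∑ u ∈ T.children v, M u) * M w / ∑ u ∈ T.children v, M u := by gcongr
      _ = M w := by rw [mul_div_cancel_left₀ _ hS]

variable (ha : a ≤ ∑ u ∈ T.children T.root, M u)
  (hM : ∀ v, v ≠ T.root → M v ≤ ∑ u ∈ T.children v, M u)
include ha hM

theorem splitFlow_le_sum_children (v : T.V) : splitFlow M a v ≤ ∑ u ∈ T.children v, M u := by
  induction v using parent_induction with
  | root => rwa [splitFlow_root]
  | step v hv ih =>
    exact (splitFlow_le_of_mem_children (parent_mem_children hv) ih).trans (hM v hv)

theorem isFlow_splitFlow : T.IsFlow (splitFlow M a) := by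
  intro v
  rw [Finset.sum_congr rfl fun w hw => splitFlow_of_mem_children hw]
  by_cases hS : ∑ u ∈ T.children v, M u = 0
  · have h0 : splitFlow M a v = 0 := le_antisymm (hS ▸ splitFlow_le_sum_children ha hM v) zero_le
    simp [h0]
  · simp only [mul_div_assoc, ← Finset.mul_sum, ← Finset.sum_div, div_self hS, mul_one]

theorem respects_splitFlow : T.Respects (splitFlow M a) M := fun v hv =>
  splitFlow_le_of_mem_children (parent_mem_children hv)
    (splitFlow_le_sum_children ha hM (T.parent v))

end splitFlow

variable (T) in
def IsRayFrom (v : T.V) (s : ℕ → T.V) : Prop :=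
  s 0 = v ∧ ∀ n, T.parent (s (n + 1)) = s n ∧ s (n + 1) ≠ T.root

variable (T) in
def Separates (v : T.V) (C : Set T.V) : Prop :=
  ∀ s : ℕ → T.V, T.IsRayFrom v s → ∃ n, s n ∈ C

variable (T) in
/-- Unlike for `IsCutset`, the set may contain `v` itself, i.e. cut the edge above `v`. -/
noncomputable def minCut (κ : T.V → ℝ≥0) (v : T.V) : ℝ≥0∞ :=
  ⨅ C : {C : Set T.V // T.Separates v C}, T.cutsetSum κ C

theorem separates_singleton (v : T.V) : T.Separates v {v} := fun _ hs => ⟨0, hs.1⟩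

instance (v : T.V) : Nonempty {C : Set T.V // T.Separates v C} := ⟨⟨{v}, separates_singleton v⟩⟩

theorem minCut_le (κ : T.V → ℝ≥0) (v : T.V) : T.minCut κ v ≤ κ v :=
  iInf_le_of_le ⟨{v}, separates_singleton v⟩ (by simp [cutsetSum])

theorem minCut_ne_top (κ : T.V → ℝ≥0) (v : T.V) : T.minCut κ v ≠ ⊤ :=
  ne_top_of_le_ne_top ENNReal.coe_ne_top (minCut_le κ v)

theorem IsRayFrom.exists_mem_biUnion {v : T.V} {s : ℕ → T.V} (hs : T.IsRayFrom v s)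
    (A : ∀ w, {C : Set T.V // T.Separates w C}) :
    ∃ n, s (n + 1) ∈ ⋃ w ∈ T.children v, (A w : Set T.V) := by
  have hchild : s 1 ∈ T.children v := mem_children.mpr ⟨hs.1 ▸ (hs.2 0).1, (hs.2 0).2⟩
  obtain ⟨n, hn⟩ := (A (s 1)).2 (fun n => s (n + 1)) ⟨rfl, fun n => hs.2 (n + 1)⟩
  exact ⟨n, Set.mem_biUnion hchild hn⟩

theorem sum_minCut_children (κ : T.V → ℝ≥0) (v : T.V) :
    ∑ w ∈ T.children v, T.minCut κ w =
      ⨅ A : ∀ w, {C : Set T.V // T.Separates w C}, ∑ w ∈ T.children v, T.cutsetSum κ (A w) :=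
  ENNReal.sum_iInf_eq_iInf_pi _ _

theorem minCut_le_sum_children (κ : T.V → ℝ≥0) (v : T.V) :
    T.minCut κ v ≤ ∑ w ∈ T.children v, T.minCut κ w := by
  rw [sum_minCut_children]
  refine le_iInf fun A => ?_
  have hsep : T.Separates v (⋃ w ∈ T.children v, (A w : Set T.V)) := fun s hs =>
    let ⟨n, hn⟩ := hs.exists_mem_biUnion A
    ⟨n + 1, hn⟩
  calc T.minCut κ v ≤ T.cutsetSum κ (⋃ w ∈ T.children v, (A w : Set T.V)) :=
        iInf_le (fun C : {C // T.Separates v C} => T.cutsetSum κ C) ⟨_, hsep⟩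
    _ ≤ _ := ENNReal.tsum_biUnion_le (fun x => (κ x : ℝ≥0∞)) _ _

theorem iInf_cutsetSum_le_sum_minCut (κ : T.V → ℝ≥0) :
    ⨅ (C : Set T.V) (_ : T.IsCutset C), T.cutsetSum κ C ≤
      ∑ w ∈ T.children T.root, T.minCut κ w := by
  rw [sum_minCut_children]
  refine le_iInf fun A => ?_
  set C := (⋃ w ∈ T.children T.root, (A w : Set T.V)) \ {T.root}
  have hC : T.IsCutset C := ⟨fun h => h.2 rfl, fun r hr =>
    (IsRayFrom.exists_mem_biUnion hr A).imp fun n h => ⟨h, (hr.2 n).2⟩⟩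
  calc ⨅ (C : Set T.V) (_ : T.IsCutset C), T.cutsetSum κ C ≤ T.cutsetSum κ C := iInf₂_le C hC
    _ ≤ T.cutsetSum κ (⋃ w ∈ T.children T.root, (A w : Set T.V)) :=
      ENNReal.tsum_mono_subtype (fun x => (κ x : ℝ≥0∞)) Set.sdiff_subset
    _ ≤ _ := ENNReal.tsum_biUnion_le (fun x => (κ x : ℝ≥0∞)) _ _

end GrowingTree

open GrowingTree

theorem iInf_cutsetSum_eq_zero_of_recurrent_general (T : GrowingTree)
    (hrec : ∀ θ : T.V → ℝ≥0, T.IsFlow θ → T.energy θ < ⊤ → T.strength θ = 0)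
    (ω : ℕ → ℝ) (hsum : Summable ω) :
    (⨅ (C : Set T.V) (_ : T.IsCutset C),
      ∑' v : C, ENNReal.ofReal (ω (T.depth v.1 - 1))) = 0 := by
  set κ : T.V → ℝ≥0 := fun v => (ω (T.depth v - 1)).toNNReal
  change ⨅ (C : Set T.V) (_ : T.IsCutset C), T.cutsetSum κ C = 0
  set M : T.V → ℝ≥0 := fun v => (T.minCut κ v).toNNReal
  have hsumM (v : T.V) : ((∑ w ∈ T.children v, M w : ℝ≥0) : ℝ≥0∞) =
      ∑ w ∈ T.children v, T.minCut κ w := by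
    simp [M, ENNReal.ofNNReal_finsetSum, ENNReal.coe_toNNReal (minCut_ne_top κ _)]
  have hM (v : T.V) (_ : v ≠ T.root) : M v ≤ ∑ w ∈ T.children v, M w := by
    rw [← ENNReal.coe_le_coe, hsumM, ENNReal.coe_toNNReal (minCut_ne_top κ v)]
    exact minCut_le_sum_children κ v
  set θ := splitFlow M (∑ w ∈ T.children T.root, M w)
  have hflow : T.IsFlow θ := isFlow_splitFlow le_rfl hM
  have hcap (v : T.V) (hv : v ≠ T.root) : (θ v : ℝ≥0∞) ≤ (ω (T.depth v - 1)).toNNReal :=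
    calc (θ v : ℝ≥0∞) ≤ M v := ENNReal.coe_le_coe.mpr (respects_splitFlow le_rfl hM v hv)
      _ = T.minCut κ v := ENNReal.coe_toNNReal (minCut_ne_top κ v)
      _ ≤ κ v := minCut_le κ v
  have hω : ∑' n, ((ω (n - 1)).toNNReal : ℝ≥0∞) ≠ ⊤ :=
    ENNReal.tsum_coe_ne_top_iff_summable.mpr ((NNReal.summable_nat_add_iff 1).mp hsum.toNNReal)
  have hstrength : ∑ w ∈ T.children T.root, M w = 0 := splitFlow_root.symm.trans <|
    hrec θ hflow <|
      (hflow.energy_le hcap).trans_lt (ENNReal.mul_lt_top hω.lt_top ENNReal.coe_lt_top)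
  refine le_antisymm ((iInf_cutsetSum_le_sum_minCut κ).trans ?_) bot_le
  rw [← hsumM, hstrength, ENNReal.coe_zero]

/-- If the simple random walk on a locally finite infinite rooted tree is recurrent
(equivalently, by the energy criterion, every finite-energy flow from the root to infinity
is zero), then for every summable sequence `(ωₙ)` of positive reals the infimum over
cutsets `Π` of `Σ_{e ∈ Π} ω_{|e|}` is zero. -/
theorem iInf_cutsetSum_eq_zero_of_recurrent (T : GrowingTree) (hinf : Infinite T.V)
    (hrec : ∀ θ : T.V → ℝ≥0, T.IsFlow θ → T.energy θ < ⊤ → T.strength θ = 0)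
    (ω : ℕ → ℝ) (hω : ∀ n, 0 < ω n) (hsum : Summable ω) :
    (⨅ (C : Set T.V) (_ : T.IsCutset C),
      ∑' v : C, ENNReal.ofReal (ω (T.depth v.1 - 1))) = 0 :=
  iInf_cutsetSum_eq_zero_of_recurrent_general T hrec ω hsum
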